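/- arXiv:2308.04998 — 2 statements merged into one kernel-verified Lean document; each statement's English description precedes it below -/
import Mathlib

section
/- For all integers n, m with m ≥ n ≥ 0, the polynomial P_{n,m} is nonzero and is homogeneous of degree n + m with respect to the grading on A in which the variable x_k has degree k. -/
open MvPolynomial

noncomputable section

/-- The polynomial ring `A = ℂ[x₁, x₂, x₃, …]`, with variables indexed by
the positive integers (`X k` is the variable `x_k`). -/
abbrev A : Type := MvPolynomial ℕ+ ℂ

/-- The elementary Schur polynomials `S_k`, defined by the generating identity
`∑_{k≥0} S_k z^k = exp(∑_{n≥1} (x_n/(2n)) z^n)`; equivalently, `S_0 = 1` and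
`(k+1) S_{k+1} = ∑_{j=0}^{k} (x_{k+1-j}/2) S_j` (obtained by differentiating in `z`). -/
noncomputable def S : ℕ → A
  | 0 => 1
  | (k+1) =>
      ((k : ℂ) + 1)⁻¹ • ∑ j ∈ (Finset.range (k+1)).attach,
        (MvPolynomial.C (2⁻¹ : ℂ) * MvPolynomial.X ((k - j.1).succPNat)) * S j.1
  termination_by k => k
  decreasing_by
    have := j.2; simp only [Finset.mem_range] at this; omega

/-- The generalized binomial coefficient `C(1/2, k) = (1/2)(1/2−1)⋯(1/2−k+1)/k!`. -/
noncomputable def halfChoose (k : ℕ) : ℂ :=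
  (∏ i ∈ Finset.range k, ((2⁻¹ : ℂ) - (i : ℂ))) / (k.factorial : ℂ)

/-- `P_{n,m} = ∑_{k=0}^{n} (−1)^k C(1/2,k) S_{m+k} S_{n−k}`. -/
noncomputable def P (n m : ℕ) : A :=
  ∑ k ∈ Finset.range (n+1), ((-1 : ℂ)^k * halfChoose k) • (S (m+k) * S (n-k))

/-- The extremal vectors `φ_n = P_{n,n}`. -/
noncomputable def phi (n : ℕ) : A := P n n

/-- The translation operator `D(p) = x₁·p + ∑_{n≥1} n·x_{n+1}·∂p/∂x_n`
(the sum is finite on each polynomial: only the variables occurring in `p` contribute,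
since `∂p/∂x_n = 0` for `n ∉ p.vars`). -/
noncomputable def D (p : A) : A :=
  MvPolynomial.X 1 * p +
    ∑ n ∈ p.vars, ((n : ℕ) : ℂ) • (MvPolynomial.X (n + 1) * MvPolynomial.pderiv n p)

end

/-!
Every `S_k` is weighted homogeneous of degree `k`, hence so is each summand `S_{m+k} S_{n-k}` of
`P_{n,m}`, of degree `n + m`. For nonvanishing, look at the coefficient of the single variable
`x_{n+m}`: since `S_j` has zero constant term for `j > 0` and `x_j` occurs in `S_j` with
coefficient `1/(2j)`, when `m > 0` only the summand `k = n` contributes, giving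
`(-1)^n C(1/2,n) / (2(n+m)) ≠ 0`; the remaining case `m = n = 0` is `P_{0,0} = 1`.
-/

lemma coeff_single_one_mul {σ R : Type*} [CommSemiring R] (p q : MvPolynomial σ R) (i : σ) :
    coeff (Finsupp.single i 1) (p * q) =
      coeff 0 p * coeff (Finsupp.single i 1) q + coeff (Finsupp.single i 1) p * coeff 0 q := by
  classical
  have antidiagonal_one : Finset.HasAntidiagonal.antidiagonal (1 : ℕ) = {(0, 1), (1, 0)} := by
    decide
  rw [coeff_mul, Finsupp.antidiagonal_single, antidiagonal_one, Finset.map_insert,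
    Finset.map_singleton, Finset.sum_insert (by simp)]
  simp

lemma halfChoose_ne_zero (k : ℕ) : halfChoose k ≠ 0 := by
  refine div_ne_zero (Finset.prod_ne_zero_iff.mpr fun i _ hi => ?_)
    (by exact_mod_cast k.factorial_ne_zero)
  have h2i : ((2 * i : ℕ) : ℂ) = ((1 : ℕ) : ℂ) := by
    push_cast
    linear_combination (-2 : ℂ) * hi
  have := Nat.cast_injective h2i
  omega

lemma S_zero : S 0 = 1 := by
  rw [S]

lemma isWeightedHomogeneous_S (k : ℕ) : (S k).IsWeightedHomogeneous PNat.val k := by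
  induction k using Nat.strong_induction_on with
  | _ k ih =>
    match k with
    | 0 => exact S_zero ▸ isWeightedHomogeneous_one ℂ _
    | k + 1 =>
      rw [S, ← mem_weightedHomogeneousSubmodule]
      refine Submodule.smul_mem _ _ (Submodule.sum_mem _ fun ⟨j, hj⟩ _ => ?_)
      rw [Finset.mem_range] at hj
      have hdeg : 0 + ((k - j).succPNat : ℕ) + j = k + 1 := by
        rw [Nat.succPNat_coe]
        omega
      have hsummand := ((isWeightedHomogeneous_C _ (2⁻¹ : ℂ)).mul
        (isWeightedHomogeneous_X ℂ _ (k - j).succPNat)).mul (ih j (by omega))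
      rwa [hdeg] at hsummand

lemma coeff_zero_S {k : ℕ} (hk : k ≠ 0) : coeff 0 (S k) = 0 :=
  (isWeightedHomogeneous_S k).coeff_eq_zero 0 (by simpa using Ne.symm hk)

lemma coeff_single_succPNat_S (k : ℕ) :
    coeff (Finsupp.single k.succPNat 1) (S (k + 1)) = (2 * ((k : ℂ) + 1))⁻¹ := by
  rw [S, coeff_smul, coeff_sum, Finset.sum_attach (Finset.range (k + 1)) (fun j =>
      coeff (Finsupp.single k.succPNat 1) (C (2⁻¹ : ℂ) * X (k - j).succPNat * S j)),
    Finset.sum_eq_single_of_mem 0 (by simp)]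
  · rw [coeff_single_one_mul, coeff_C_mul, coeff_C_mul, coeff_zero_X, Nat.sub_zero, S_zero,
      coeff_zero_one, coeff_single_X, if_pos ⟨rfl, rfl⟩, smul_eq_mul, mul_inv]
    ring
  · intro j _ hj
    rw [coeff_single_one_mul, coeff_C_mul, coeff_zero_X, coeff_zero_S hj]
    ring

lemma isWeightedHomogeneous_P (n m : ℕ) : (P n m).IsWeightedHomogeneous PNat.val (n + m) := by
  rw [P, ← mem_weightedHomogeneousSubmodule]
  refine Submodule.sum_mem _ fun k hk => Submodule.smul_mem _ _ ?_
  rw [Finset.mem_range] at hk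
  have hdeg : (m + k) + (n - k) = n + m := by omega
  exact hdeg ▸ (isWeightedHomogeneous_S (m + k)).mul (isWeightedHomogeneous_S (n - k))

lemma coeff_single_succPNat_P {n m t : ℕ} (hm : 0 < m) (ht : n + m = t + 1) :
    coeff (Finsupp.single t.succPNat 1) (P n m) =
      (-1) ^ n * halfChoose n * (2 * ((t : ℂ) + 1))⁻¹ := by
  rw [P, coeff_sum, Finset.sum_eq_single_of_mem n (by simp)]
  · rw [coeff_smul, coeff_single_one_mul, coeff_zero_S (by omega), Nat.sub_self, S_zero,
      coeff_zero_one, show m + n = t + 1 by omega, coeff_single_succPNat_S, smul_eq_mul]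
    ring
  · intro k hk hkn
    rw [Finset.mem_range] at hk
    rw [coeff_smul, coeff_single_one_mul, coeff_zero_S (by omega), coeff_zero_S (by omega)]
    simp

lemma P_zero_zero : P 0 0 = 1 := by
  simp [P, halfChoose, S_zero]

lemma P_ne_zero_of_pos {n m : ℕ} (hm : 0 < m) : P n m ≠ 0 := by
  intro hP
  have hcoeff := coeff_single_succPNat_P (n := n) (t := n + m - 1) hm (by omega)
  rw [hP, coeff_zero] at hcoeff
  have hinv : (2 * (((n + m - 1 : ℕ) : ℂ) + 1))⁻¹ ≠ 0 :=
    inv_ne_zero (mul_ne_zero two_ne_zero (Nat.cast_add_one_ne_zero _))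
  exact mul_ne_zero (mul_ne_zero (by simp) (halfChoose_ne_zero n)) hinv hcoeff.symm

/-- For `m ≥ n ≥ 0`, the polynomial `P_{n,m}` is nonzero and homogeneous of degree
`n + m` for the grading in which the variable `x_k` has degree `k`. -/
theorem P_ne_zero_and_weighted_homogeneous (n m : ℕ) (h : n ≤ m) :
    P n m ≠ 0 ∧
      (P n m).IsWeightedHomogeneous (fun k : ℕ+ => (k : ℕ)) (n + m) := by
  refine ⟨?_, isWeightedHomogeneous_P n m⟩
  rcases Nat.eq_zero_or_pos m with rfl | hm
  · obtain rfl : n = 0 := by omega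
    exact P_zero_zero ▸ one_ne_zero
  · exact P_ne_zero_of_pos hm
end

section
/- The family {D^a(φ_b) : a ≥ 0, b ≥ 0} is linearly independent over ℂ in A. -/
open MvPolynomial

/-!
Send `x_n ↦ t·X^n`. This remembers only the weight grading and sets every variable to `t`; it
turns `D` into `t·X + X²·d/dX` and `φ_b` into `f_b(t)·X^{2b}`, hence `D^a φ_b` into
`(∏_{i<a} (t + 2b + i))·f_b(t)·X^{a+2b}`. In a vanishing linear combination, look at one weight
`w = a + 2b` and at the largest `b` occurring there: at `t = 1 - 2b` every other term of weight
`w` is killed by the product, while `f_b(1 - 2b) ≠ 0` because these values satisfy a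
first-order recurrence with nonzero coefficients (found by Zeilberger's algorithm).
-/

theorem linearIndependent_of_triangular {ι κ R M : Type*} [LinearOrder κ] [Ring R]
    [NoZeroDivisors R] [AddCommGroup M] [Module R M] (v : ι → M) (ℓ : ι → M →ₗ[R] R)
    (key : ι → κ) (hkey : Function.Injective key) (hdiag : ∀ i, ℓ i (v i) ≠ 0)
    (hlower : ∀ i j, key j < key i → ℓ i (v j) = 0) : LinearIndependent R v := by
  classical
  rw [linearIndependent_iff']
  intro s g hg i hi
  by_contra hgi
  obtain ⟨j, hj, hmax⟩ :=
    (s.filter (g · ≠ 0)).exists_max_image key ⟨i, Finset.mem_filter.mpr ⟨hi, hgi⟩⟩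
  rw [Finset.mem_filter] at hj
  have hℓ := congrArg (ℓ j) hg
  rw [map_sum, map_zero, Finset.sum_eq_single_of_mem j hj.1, map_smul, smul_eq_mul] at hℓ
  · exact mul_ne_zero hj.2 (hdiag j) hℓ
  · intro k hk hkj
    by_cases hgk : g k = 0
    · rw [hgk, zero_smul, map_zero]
    · have hlt := (hmax k (Finset.mem_filter.mpr ⟨hk, hgk⟩)).lt_of_ne (hkey.ne hkj)
      rw [map_smul, hlower j k hlt, smul_zero]

theorem two_mul_natCast_ne_one {R : Type*} [Semiring R] [CharZero R] (n : ℕ) :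
    (2 * n : R) ≠ 1 := by
  norm_cast
  omega

noncomputable def translationDerivation : Derivation ℂ A A :=
  mkDerivation ℂ fun n => ((n : ℕ) : ℂ) • X (n + 1)

theorem D_eq_X_one_mul_add (p : A) : D p = X 1 * p + translationDerivation p := by
  let δ : Derivation ℂ A A :=
    ∑ n ∈ p.vars, ((n : ℕ) : ℂ) • (X (n + 1) : A) • pderiv n
  have hδ (q : A) : δ q = ∑ n ∈ p.vars, ((n : ℕ) : ℂ) • (X (n + 1) * pderiv n q) := by
    rw [← Derivation.coeFnAddMonoidHom_apply, map_sum, Finset.sum_apply]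
    rfl
  have hδX : ∀ i ∈ p.vars, δ (X i) = translationDerivation (X i) := by
    intro i hi
    rw [hδ, translationDerivation, mkDerivation_X, Finset.sum_eq_single_of_mem i hi]
    · simp
    · intro n _ hni
      simp [pderiv_X, hni]
  rw [D, ← hδ, derivation_eq_of_forall_mem_vars hδX]

section Specialization

open Polynomial

noncomputable def specialization (t : ℂ) : A →ₐ[ℂ] ℂ[X] :=
  aeval fun n => Polynomial.C t * Polynomial.X ^ (n : ℕ)

-- The coefficient of `z^k` in `(1 - z)^(-t/2)`, i.e. `S_k` at `x_n = t` for all `n`.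
noncomputable def schurCoeff (t : ℂ) : ℕ → ℂ
  | 0 => 1
  | k + 1 => (t / 2 + k) / (k + 1) * schurCoeff t k

variable (t : ℂ)

theorem schurCoeff_succ_mul (k : ℕ) :
    (k + 1) * schurCoeff t (k + 1) = (t / 2 + k) * schurCoeff t k := by
  rw [schurCoeff]
  field_simp

theorem mul_sum_schurCoeff (k : ℕ) :
    t / 2 * ∑ j ∈ Finset.range (k + 1), schurCoeff t j = (t / 2 + k) * schurCoeff t k := by
  induction k with
  | zero => simp [schurCoeff]
  | succ k ih =>
    rw [Finset.sum_range_succ, mul_add, ih, ← schurCoeff_succ_mul]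
    push_cast
    ring

theorem specialization_X (n : ℕ+) :
    specialization t (X n) = Polynomial.C t * Polynomial.X ^ (n : ℕ) :=
  aeval_X _ n

theorem specialization_C (a : ℂ) : specialization t (MvPolynomial.C a) = Polynomial.C a :=
  aeval_C _ a

theorem specialization_S (k : ℕ) :
    specialization t (S k) = Polynomial.C (schurCoeff t k) * Polynomial.X ^ k := by
  induction k using Nat.strong_induction_on with
  | _ k ih =>
    match k with
    | 0 => simp [S, schurCoeff]
    | k + 1 =>
      have hterm (j : ℕ) (hj : j < k + 1) :
          specialization t (MvPolynomial.C 2⁻¹ * X (k - j).succPNat * S j) =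
            Polynomial.C (t / 2 * schurCoeff t j) * Polynomial.X ^ (k + 1) := by
        rw [map_mul, map_mul, specialization_C, specialization_X, ih j hj, Nat.succPNat_coe,
          show k + 1 = (k - j).succ + j by omega, pow_add, div_eq_mul_inv, Polynomial.C_mul,
          Polynomial.C_mul]
        ring
      rw [S, map_smul, map_sum, Finset.sum_attach (Finset.range (k + 1))
        (fun j => specialization t (MvPolynomial.C 2⁻¹ * X (k - j).succPNat * S j)),
        Finset.sum_congr rfl fun j hj => hterm j (Finset.mem_range.mp hj), ← Finset.sum_mul,
        ← map_sum, ← Finset.mul_sum, mul_sum_schurCoeff, schurCoeff]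
      simp only [Polynomial.smul_eq_C_mul, ← mul_assoc, ← Polynomial.C_mul]
      congr 2
      field_simp

noncomputable def phiTerm (b k : ℕ) : ℂ :=
  (-1) ^ k * halfChoose k * (schurCoeff t (b + k) * schurCoeff t (b - k))

noncomputable def phiCoeff (b : ℕ) : ℂ :=
  ∑ k ∈ Finset.range (b + 1), phiTerm t b k

theorem specialization_phi (b : ℕ) :
    specialization t (phi b) = Polynomial.C (phiCoeff t b) * Polynomial.X ^ (2 * b) := by
  rw [phi, P, map_sum, phiCoeff, map_sum, Finset.sum_mul]
  refine Finset.sum_congr rfl fun k hk => ?_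
  rw [map_smul, map_mul, specialization_S, specialization_S, phiTerm,
    show 2 * b = b + k + (b - k) by have := Finset.mem_range.mp hk; omega, pow_add,
    Polynomial.smul_eq_C_mul]
  simp only [map_mul]
  ring

theorem specialization_translationDerivation (p : A) :
    specialization t (translationDerivation p) =
      Polynomial.X ^ 2 * derivative (specialization t p) := by
  induction p using MvPolynomial.induction_on with
  | C a => rw [MvPolynomial.derivation_C, specialization_C, derivative_C, mul_zero, map_zero]
  | add p q hp hq => rw [map_add, map_add, hp, hq, map_add, map_add, mul_add]
  | mul_X p n hp =>
    obtain ⟨m, hm⟩ : ∃ m, (n : ℕ) = m + 1 := ⟨n - 1, by have := n.pos; omega⟩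
    rw [Derivation.leibniz, smul_eq_mul, smul_eq_mul, translationDerivation,
      MvPolynomial.mkDerivation_X, ← translationDerivation, map_add, map_mul, map_mul, map_smul,
      hp, map_mul, specialization_X, specialization_X, PNat.add_coe, PNat.one_coe, hm,
      derivative_mul, derivative_mul, derivative_C, derivative_X_pow, Polynomial.smul_eq_C_mul]
    simp only [map_natCast, Nat.add_sub_cancel]
    push_cast
    ring

theorem specialization_D (p : A) :
    specialization t (D p) =
      Polynomial.C t * Polynomial.X * specialization t p +
        Polynomial.X ^ 2 * derivative (specialization t p) := by
  rw [D_eq_X_one_mul_add, map_add, map_mul, specialization_X, PNat.one_coe, pow_one,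
    specialization_translationDerivation]

theorem specialization_D_of_eq_C_mul_X_pow {p : A} {c : ℂ} {m : ℕ}
    (hp : specialization t p = Polynomial.C c * Polynomial.X ^ m) :
    specialization t (D p) = Polynomial.C ((t + m) * c) * Polynomial.X ^ (m + 1) := by
  rw [specialization_D, hp, derivative_C_mul_X_pow]
  cases m with
  | zero => simp only [Nat.cast_zero, map_mul, map_add, map_zero]; ring
  | succ m => simp only [Nat.add_sub_cancel, map_mul, map_add, map_natCast]; ring

theorem specialization_iterate_D_phi (a b : ℕ) :
    specialization t (D^[a] (phi b)) =
      Polynomial.C ((∏ i ∈ Finset.range a, (t + (2 * b + i : ℕ))) * phiCoeff t b) *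
        Polynomial.X ^ (a + 2 * b) := by
  induction a with
  | zero => simp [specialization_phi]
  | succ a ih =>
    rw [Function.iterate_succ_apply', specialization_D_of_eq_C_mul_X_pow t ih,
      Finset.prod_range_succ, show a + 1 + 2 * b = a + 2 * b + 1 by omega]
    push_cast
    ring_nf

end Specialization

theorem halfChoose_succ_mul (k : ℕ) :
    (k + 1) * halfChoose (k + 1) = (1 / 2 - k) * halfChoose k := by
  rw [halfChoose, halfChoose, Finset.prod_range_succ, Nat.factorial_succ]
  push_cast
  field_simp

-- Differentiate `(1 - z)^(1 - t/2)`.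
theorem schurCoeff_sub_two_succ_mul (t : ℂ) (m : ℕ) :
    (m + 1) * schurCoeff (t - 2) (m + 1) = (t / 2 - 1) * schurCoeff t m := by
  induction m with
  | zero => simp only [schurCoeff]; ring
  | succ m ih =>
    have hm : ((m : ℂ) + 1) ≠ 0 := Nat.cast_add_one_ne_zero m
    apply mul_left_cancel₀ hm
    have h := schurCoeff_succ_mul (t - 2) (m + 1)
    have h' := schurCoeff_succ_mul t m
    push_cast at h ⊢
    linear_combination ((m : ℂ) + 1) * h + ((t - 2) / 2 + m + 1) * ih - (t / 2 - 1) * h'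

theorem phiTerm_succ_right_mul (b j : ℕ) (hj : j < b) :
    2 * (j + 1) * (b + j + 1) * phiTerm (1 - 2 * b) b (j + 1) =
      -(2 * j - 1) * (b - j) * phiTerm (1 - 2 * b) b j := by
  obtain ⟨m, rfl⟩ := Nat.exists_eq_add_of_lt hj
  have hC := halfChoose_succ_mul j
  have hS := schurCoeff_succ_mul (1 - 2 * (j + m + 1 : ℕ)) (j + m + 1 + j)
  have hS' := schurCoeff_succ_mul (1 - 2 * (j + m + 1 : ℕ)) m
  rw [phiTerm, phiTerm, show j + m + 1 + (j + 1) = j + m + 1 + j + 1 by omega,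
    show j + m + 1 - (j + 1) = m by omega, show j + m + 1 - j = m + 1 by omega]
  push_cast at hS hS' ⊢
  set s := schurCoeff (1 - 2 * (j + m + 1))
  linear_combination (-2 * (-1) ^ j * s m) * ((j + m + 1 + j + 1) * s (j + m + 1 + j + 1)) * hC
    + (-2 * (-1) ^ j * s m * (1 / 2 - j) * halfChoose j) * hS
    + ((2 * j - 1) * (-1) ^ j * halfChoose j * s (j + m + 1 + j)) * hS'

theorem phiTerm_succ_left_mul (b k : ℕ) (hk : k ≤ b) :
    (b + 1 + k) * (b + 1 - k) * phiTerm (1 - 2 * (b + 1 : ℕ)) (b + 1) k =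
      (1 / 2 - (b + 1)) ^ 2 * phiTerm (1 - 2 * b) b k := by
  obtain ⟨m, rfl⟩ := Nat.exists_eq_add_of_le hk
  have hshift : (1 - 2 * (k + m + 1 : ℕ) : ℂ) = 1 - 2 * (k + m : ℕ) - 2 := by push_cast; ring
  have h1 := schurCoeff_sub_two_succ_mul (1 - 2 * (k + m : ℕ)) (k + m + k)
  have h2 := schurCoeff_sub_two_succ_mul (1 - 2 * (k + m : ℕ)) m
  rw [phiTerm, phiTerm, hshift, show k + m + 1 + k = k + m + k + 1 by omega,
    show k + m + 1 - k = m + 1 by omega, show k + m - k = m by omega]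
  push_cast at h1 h2 ⊢
  set s' := schurCoeff (1 - 2 * (k + m) - 2)
  set s := schurCoeff (1 - 2 * (k + m))
  linear_combination ((-1) ^ k * halfChoose k * ((m + 1) * s' (m + 1))) * h1
    + ((-1) ^ k * halfChoose k * ((1 - 2 * (k + m)) / 2 - 1) * s (k + m + k)) * h2

theorem sum_range_mul_eq_of_succ_mul (u : ℕ) (T : ℕ → ℂ)
    (hT : ∀ j < u, 2 * (j + 1) * (u + j + 1) * T (j + 1) = -(2 * j - 1) * (u - j) * T j) :
    (1 / 2 - u) ^ 2 * (16 * u ^ 2 * (2 * u + 1)) * ∑ k ∈ Finset.range (u + 1), T k =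
      (2 * u - 1) * (4 * u - 1) * (4 * u + 1) *
        ∑ k ∈ Finset.range (u + 1), (u + k) * (u - k) * T k := by
  -- Zeilberger certificate: the `k`-th summand below is `F k - F (k - 1)`,
  -- where `F k = (2u - 1)/2 · N k · T k` and `N u = 0`.
  let N : ℂ → ℂ := fun k => 2 * k ^ 2 - 4 * k ^ 3 + 4 * u * k - 16 * u * k ^ 3 - 6 * u ^ 2 +
    4 * u ^ 2 * k + 16 * u ^ 2 * k ^ 2
  have partial_sum (n : ℕ) (hn : n ≤ u) :
      ∑ k ∈ Finset.range (n + 1), ((1 / 2 - u) ^ 2 * (16 * u ^ 2 * (2 * u + 1)) -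
        (2 * u - 1) * (4 * u - 1) * (4 * u + 1) * ((u + k) * (u - k))) * T k =
        (2 * u - 1) / 2 * N n * T n := by
    induction n with
    | zero => simp only [N, zero_add, Finset.sum_range_one]; push_cast; ring
    | succ n ih =>
      have hn' : n < u := by omega
      have hne : -(2 * (n : ℂ) - 1) * (u - n) ≠ 0 := by
        refine mul_ne_zero (neg_ne_zero.mpr (sub_ne_zero.mpr (two_mul_natCast_ne_one n)))
          (sub_ne_zero.mpr ?_)
        exact_mod_cast hn'.ne'
      rw [Finset.sum_range_succ, ih hn'.le]
      apply mul_left_cancel₀ hne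
      simp only [N]
      push_cast
      linear_combination (-(2 * u - 1) / 2 * N n) * hT n hn'
  rw [← sub_eq_zero, Finset.mul_sum, Finset.mul_sum, ← Finset.sum_sub_distrib]
  refine (Finset.sum_congr rfl fun k _ => by ring).trans ((partial_sum u le_rfl).trans ?_)
  simp only [N]
  ring

theorem phiCoeff_succ_mul (b : ℕ) :
    16 * (b + 1) ^ 2 * (2 * b + 3) * phiCoeff (1 - 2 * (b + 1 : ℕ)) (b + 1) =
      (2 * b + 1) * (4 * b + 3) * (4 * b + 5) * phiCoeff (1 - 2 * b) b := by
  set T := phiTerm (1 - 2 * (b + 1 : ℕ)) (b + 1) with hT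
  have hσ : (1 / 2 - ((b : ℂ) + 1)) ^ 2 ≠ 0 := by
    refine pow_ne_zero _ fun h => two_mul_natCast_ne_one (R := ℂ) (b + 1) ?_
    push_cast
    linear_combination -2 * h
  have hsum := sum_range_mul_eq_of_succ_mul (b + 1) T (phiTerm_succ_right_mul (b + 1))
  have hrel : (1 / 2 - ((b : ℂ) + 1)) ^ 2 * phiCoeff (1 - 2 * b) b =
      ∑ k ∈ Finset.range (b + 1 + 1), ((b + 1 : ℕ) + k) * ((b + 1 : ℕ) - k) * T k := by
    rw [Finset.sum_range_succ, sub_self, mul_zero, zero_mul, add_zero, phiCoeff, Finset.mul_sum]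
    refine Finset.sum_congr rfl fun k hk => ?_
    rw [← phiTerm_succ_left_mul b k (Nat.lt_succ_iff.mp (Finset.mem_range.mp hk)), hT]
    push_cast
    rfl
  rw [show phiCoeff (1 - 2 * (b + 1 : ℕ)) (b + 1) = ∑ k ∈ Finset.range (b + 1 + 1), T k
    from rfl]
  clear_value T
  apply mul_left_cancel₀ hσ
  push_cast at hsum hrel ⊢
  linear_combination hsum - (2 * b + 1) * (4 * b + 3) * (4 * b + 5) * hrel

theorem phiCoeff_one_sub_two_mul_ne_zero (b : ℕ) : phiCoeff (1 - 2 * b) b ≠ 0 := by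
  induction b with
  | zero => simp [phiCoeff, phiTerm, halfChoose, schurCoeff]
  | succ b ih =>
    intro h
    have hrec := phiCoeff_succ_mul b
    rw [h, mul_zero] at hrec
    have hpos : ((2 * b + 1) * (4 * b + 3) * (4 * b + 5) : ℂ) ≠ 0 := by
      exact_mod_cast (by positivity : (2 * b + 1) * (4 * b + 3) * (4 * b + 5) ≠ 0)
    exact mul_ne_zero hpos ih hrec.symm

theorem coeff_specialization_iterate_D_phi_ne_zero (a b : ℕ) :
    (specialization (1 - 2 * b) (D^[a] (phi b))).coeff (a + 2 * b) ≠ 0 := by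
  rw [specialization_iterate_D_phi, Polynomial.coeff_C_mul_X_pow, if_pos rfl]
  refine mul_ne_zero (Finset.prod_ne_zero_iff.mpr fun i _ => ?_)
    (phiCoeff_one_sub_two_mul_ne_zero b)
  rw [show (1 - 2 * b + (2 * b + i : ℕ) : ℂ) = i + 1 by push_cast; ring]
  exact Nat.cast_add_one_ne_zero i

theorem coeff_specialization_iterate_D_phi_eq_zero {a b a' b' : ℕ}
    (h : toLex (a' + 2 * b', b') < toLex (a + 2 * b, b)) :
    (specialization (1 - 2 * b) (D^[a'] (phi b'))).coeff (a + 2 * b) = 0 := by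
  rw [specialization_iterate_D_phi, Polynomial.coeff_C_mul_X_pow]
  split_ifs with hw
  · have hb : b' < b := by
      rw [Prod.Lex.toLex_lt_toLex] at h
      omega
    refine mul_eq_zero_of_left (Finset.prod_eq_zero (i := 2 * b - 2 * b' - 1)
      (Finset.mem_range.mpr (by omega)) ?_) _
    have hcast : ((2 * b' + (2 * b - 2 * b' - 1) : ℕ) : ℂ) + 1 = 2 * b := by
      exact_mod_cast (show 2 * b' + (2 * b - 2 * b' - 1) + 1 = 2 * b by omega)
    linear_combination hcast
  · rfl

/-- The family `{D^a(φ_b) : a, b ≥ 0}` is linearly independent over `ℂ`. -/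
theorem iterate_D_phi_linearIndependent :
    LinearIndependent ℂ (fun q : ℕ × ℕ => D^[q.1] (phi q.2)) := by
  refine linearIndependent_of_triangular _
    (fun q => (Polynomial.lcoeff ℂ (q.1 + 2 * q.2)).comp
      (specialization (1 - 2 * q.2)).toLinearMap)
    (fun q => toLex (q.1 + 2 * q.2, q.2)) (fun q q' h => ?_)
    (fun q => coeff_specialization_iterate_D_phi_ne_zero q.1 q.2)
    (fun _ _ => coeff_specialization_iterate_D_phi_eq_zero)
  simp only [toLex_inj, Prod.mk.injEq] at h
  ext <;> omega
end
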